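/- Let T > 0 and let φⁿ, φ ∈ C₀([0,T],ℂ) be such that φⁿ → φ uniformly on [0,T]. Suppose that for every n and every t ∈ (0,T], φⁿ(t) ∈ ℂ \ [0,∞). Then there exist a subsequence φ^{n_k} and a continuous function A: [0,T] → ℂ with A(t)² = φ(t) and Im A(t) ≥ 0 for all t ∈ [0,T], such that t ↦ √(φ^{n_k}(t)) converges uniformly on [0,T] to A. -/

import Mathlib

open MeasureTheory Set Filter

/-- The branch of the complex square root mapping `ℂ \ [0,∞)` into the open upper
half-plane; on `[0,∞)` it is the usual nonnegative real square root. -/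
noncomputable def upSqrt (z : ℂ) : ℂ :=
  if z.im = 0 ∧ 0 ≤ z.re then (Real.sqrt z.re : ℂ)
  else Complex.I * (-z) ^ ((1 : ℂ) / 2)

/-- `z ∈ ℂ \ [0,∞)`. -/
def offPosReal (z : ℂ) : Prop := ¬(z.im = 0 ∧ 0 ≤ z.re)

/-- The Cameron–Martin space `H¹₀([0,T],ℝ)`: absolutely continuous `h` with `h 0 = 0`
and derivative `dFun ∈ L²([0,T],ℝ)`, recorded via `h t = ∫₀ᵗ h'`. -/
structure CM (T : ℝ) where
  toFun : ℝ → ℝ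
  dFun : ℝ → ℝ
  measurable_dFun : Measurable dFun
  memL2 : MeasureTheory.MemLp dFun 2 (MeasureTheory.volume.restrict (Set.Ioc 0 T))
  eq_int : ∀ t ∈ Set.Icc 0 T, toFun t = ∫ s in Set.Ioc 0 t, dFun s

/-- `φ` is the solution `φ^h`: continuous on `[0,T]`, `φ 0 = 0`, valued in
`ℂ \ [0,∞)` on `(0,T]`, and `φ t = -t + 2∫₀ᵗ √(φ s) h'(s) ds`. -/
def IsPhiH (T : ℝ) (h : CM T) (φ : ℝ → ℂ) : Prop :=
  ContinuousOn φ (Set.Icc 0 T) ∧ φ 0 = 0 ∧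
  (∀ t ∈ Set.Ioc 0 T, offPosReal (φ t)) ∧
  ∀ t ∈ Set.Icc 0 T, φ t = -(t : ℂ) + 2 * ∫ s in Set.Ioc 0 t, upSqrt (φ s) * ((h.dFun s : ℝ) : ℂ)

/-- `d` is an (integrable) a.e. derivative of `φ` on `[0,T]`, i.e. `Re φ`, `Im φ` are
absolutely continuous with `φ t = ∫₀ᵗ d`. -/
def IsDensityOn (T : ℝ) (φ : ℝ → ℂ) (d : ℝ → ℂ) : Prop :=
  MeasureTheory.IntegrableOn d (Set.Ioc 0 T) ∧
  ∀ t ∈ Set.Icc 0 T, φ t = ∫ s in Set.Ioc 0 t, d s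

/-- The rate function `I(φ) = ∫₀ᵀ (φ'(t)+1)²/(8 φ(t)) dt` for `φ ∈ D([0,T],ℂ)`
(conditions (H1),(H2),(H3)), and `+∞` otherwise.  For any admissible density `d = φ'`,
the realness condition (H3) gives `(φ'+1)²/(8φ) = (Re((φ'+1)/(2√φ)))²/2`. -/
noncomputable def rateI (T : ℝ) (φ : ℝ → ℂ) : ENNReal :=
  ⨅ (d : ℝ → ℂ) (_ : IsDensityOn T φ d ∧
      (∀ t ∈ Set.Ioc 0 T, offPosReal (φ t)) ∧
      (∀ᵐ t ∂(MeasureTheory.volume.restrict (Set.Ioc 0 T)),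
        ((d t + 1) / (2 * upSqrt (φ t))).im = 0) ∧
      MeasureTheory.MemLp (fun t => ((d t + 1) / (2 * upSqrt (φ t))).re) 2
        (MeasureTheory.volume.restrict (Set.Ioc 0 T))),
    ∫⁻ t in Set.Ioc 0 T, ENNReal.ofReal ((((d t + 1) / (2 * upSqrt (φ t))).re) ^ 2 / 2)

/-- Riemann–Stieltjes integral `∫₀ᵀ f da` in its integration-by-parts form
`f(T)a(T) - ∫₀ᵀ a(r) f'(r) dr` (for `a 0 = 0`). -/
noncomputable def RSint (T : ℝ) (f a : ℝ → ℝ) : ℝ :=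
  f T * a T - ∫ r in Set.Ioc 0 T, a r * deriv f r

/-- The functional `J_{f,g}(ξ)`. -/
noncomputable def Jfun (T : ℝ) (f g : ℝ → ℝ) (ξ : ℝ → ℂ) : ℝ :=
  (1 / 2) * (RSint T f (fun r => (ξ r).re + r) + RSint T g (fun r => (ξ r).im)) -
    (1 / 2) * ∫ r in Set.Ioc 0 T,
      (f r ^ 2 * (‖ξ r‖ + (ξ r).re) / 2 +
        g r ^ 2 * (‖ξ r‖ - (ξ r).re) / 2 + f r * g r * (ξ r).im)

/-!
The square roots `√φⁿ` are uniformly bounded, since `‖√z‖ = √‖z‖` and the `φⁿ` converge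
uniformly. They are also equicontinuous: the `φⁿ` are, and while `φⁿ` stays close to `φⁿ(s)` on an
interval `[s, t]`, the continuous function `√φⁿ` cannot switch from `√φⁿ(s)` to `-√φⁿ(s)`.
Arzelà–Ascoli gives a uniformly convergent subsequence, whose limit `A` inherits `A² = φ` and
`Im A ≥ 0` pointwise.
-/

open Bornology Metric Topology

lemma upSqrt_sq (z : ℂ) : upSqrt z ^ 2 = z := by
  unfold upSqrt
  split_ifs with h
  · rw [← Complex.ofReal_pow, Real.sq_sqrt h.2]
    exact Complex.ext (by simp) (by simp [h.1])
  · rw [mul_pow, Complex.I_sq, one_div, ← Nat.cast_ofNat, Complex.cpow_nat_inv_pow _ two_ne_zero]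
    ring

lemma norm_upSqrt (z : ℂ) : ‖upSqrt z‖ = √‖z‖ := by
  rw [← Real.sqrt_sq (norm_nonneg (upSqrt z)), ← norm_pow, upSqrt_sq]

lemma upSqrt_im_nonneg (z : ℂ) : 0 ≤ (upSqrt z).im := by
  unfold upSqrt
  split_ifs
  · simp
  · simp only [Complex.mul_im, Complex.I_re, Complex.I_im, one_div, Complex.cpow_inv_two_re,
      zero_mul, one_mul, zero_add]
    exact Real.sqrt_nonneg _

lemma offPosReal_iff_neg_mem_slitPlane {z : ℂ} : offPosReal z ↔ -z ∈ Complex.slitPlane := by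
  rw [offPosReal, Complex.mem_slitPlane_iff, not_and_or, not_le, Complex.neg_re, Complex.neg_im,
    neg_pos, neg_ne_zero, or_comm]

lemma continuousAt_upSqrt {z : ℂ} (hz : z = 0 ∨ offPosReal z) : ContinuousAt upSqrt z := by
  rcases hz with rfl | hz
  · have h0 : upSqrt 0 = 0 := by simpa using upSqrt_sq 0
    rw [ContinuousAt, h0, tendsto_zero_iff_norm_tendsto_zero]
    simp only [norm_upSqrt]
    simpa using continuous_norm.sqrt.tendsto (0 : ℂ)
  · have hopen : IsOpen {w : ℂ | offPosReal w} := by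
      simp only [offPosReal_iff_neg_mem_slitPlane]
      exact Complex.isOpen_slitPlane.preimage continuous_neg
    have heq : (fun w => Complex.I * (-w) ^ ((1 : ℂ) / 2)) =ᶠ[𝓝 z] upSqrt :=
      eventually_of_mem (hopen.mem_nhds hz) fun w hw => (if_neg hw).symm
    refine ContinuousAt.congr ?_ heq
    exact continuousAt_const.mul
      ((continuousAt_cpow_const (offPosReal_iff_neg_mem_slitPlane.1 hz)).comp
        continuous_neg.continuousAt)

section RCLike

variable {𝕜 : Type*} [RCLike 𝕜]

/-- The two square roots `±f x` of `f x ^ 2` are `2 ‖f x‖` apart, so on a connected set the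
continuous `f` cannot pass from one to the other without crossing the gap between them. -/
theorem norm_sub_le_of_norm_sq_sub_sq_le {X : Type*} [TopologicalSpace X] {S : Set X}
    (hS : IsPreconnected S) {f : X → 𝕜} (hf : ContinuousOn f S) {x y : X} (hx : x ∈ S)
    (hy : y ∈ S) {ε : ℝ} (hε : 0 ≤ ε) (h : ∀ z ∈ S, ‖f z ^ 2 - f x ^ 2‖ ≤ ε ^ 2) :
    ‖f y - f x‖ ≤ 3 * ε := by
  by_cases hsmall : ‖f x‖ ≤ ε
  · have hfy : ‖f y‖ ^ 2 ≤ 2 * ε ^ 2 := by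
      calc ‖f y‖ ^ 2 = ‖(f y ^ 2 - f x ^ 2) + f x ^ 2‖ := by rw [sub_add_cancel, norm_pow]
        _ ≤ ε ^ 2 + ‖f x‖ ^ 2 := by
          grw [norm_add_le, h y hy, norm_pow]
        _ ≤ 2 * ε ^ 2 := by nlinarith [norm_nonneg (f x)]
    have : ‖f y‖ ≤ 2 * ε := by nlinarith [norm_nonneg (f y)]
    linarith [norm_sub_le (f y) (f x)]
  rw [not_le] at hsmall
  set a := ‖f x‖
  have hgap : ∀ z ∈ S, ‖f z - f x‖ ≤ ε ∨ 2 * a - ε ≤ ‖f z - f x‖ := by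
    intro z hz
    have hprod : ‖f z - f x‖ * ‖f z + f x‖ ≤ ε ^ 2 := by
      rw [← norm_mul, mul_comm, ← sq_sub_sq]
      exact h z hz
    have hsum : 2 * a ≤ ‖f z + f x‖ + ‖f z - f x‖ := by
      calc 2 * a = ‖(f z + f x) - (f z - f x)‖ := by
            rw [add_sub_sub_cancel, ← two_mul, norm_mul, RCLike.norm_two]
        _ ≤ ‖f z + f x‖ + ‖f z - f x‖ := norm_sub_le _ _
    by_contra! hmid
    have : ε < ‖f z + f x‖ := by linarith
    nlinarith
  have hcont : ContinuousOn (fun z => ‖f z - f x‖) S := (hf.sub continuousOn_const).norm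
  by_contra! hfar
  obtain ⟨z, hz, hza⟩ : a ∈ (fun z => ‖f z - f x‖) '' S :=
    hS.intermediate_value hx hy hcont
      ⟨by simpa using hε.trans hsmall.le, by rcases hgap y hy with h | h <;> linarith⟩
  rcases hgap z hz with h | h <;> simp only [hza] at h <;> linarith

theorem EquicontinuousWithinAt.of_sq {ι : Type*} {G : ι → ℝ → 𝕜} {S : Set ℝ}
    (hS : S.OrdConnected) {x₀ : ℝ} (hx₀ : x₀ ∈ S) (hG : ∀ i, ContinuousOn (G i) S)
    (h : EquicontinuousWithinAt (fun i t => G i t ^ 2) S x₀) :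
    EquicontinuousWithinAt G S x₀ := by
  have hbasis := nhdsWithin_hasBasis (nhds_basis_ball (x := x₀)) S
  rw [hbasis.equicontinuousWithinAt_iff uniformity_basis_dist] at h ⊢
  intro ε hε
  obtain ⟨δ, hδ, hclose⟩ := h ((ε / 4) ^ 2) (by positivity)
  refine ⟨δ, hδ, fun x hx i => ?_⟩
  have hball : (ball x₀ δ).OrdConnected := by
    rw [Real.ball_eq_Ioo]
    exact ordConnected_Ioo
  have hsub : uIcc x₀ x ⊆ ball x₀ δ ∩ S :=
    subset_inter (hball.uIcc_subset (mem_ball_self hδ) hx.1)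
      (hS.uIcc_subset hx₀ hx.2)
  have key := norm_sub_le_of_norm_sq_sub_sq_le isPreconnected_uIcc ((hG i).mono (hsub.trans
    inter_subset_right)) left_mem_uIcc right_mem_uIcc (ε := ε / 4) (by positivity)
    fun z hz => by rw [norm_sub_rev, ← dist_eq_norm]; exact (hclose z (hsub hz) i).le
  simp only [mem_ofPred_eq, dist_eq_norm, norm_sub_rev (G i x₀)]
  linarith

end RCLike

theorem TendstoUniformlyOn.equicontinuousOn {X α : Type*} [TopologicalSpace X]
    [PseudoMetricSpace α] {F : ℕ → X → α} {f : X → α} {S : Set X}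
    (hF : ∀ n, ContinuousOn (F n) S) (h : TendstoUniformlyOn F f atTop S) :
    EquicontinuousOn F S := by
  intro x₀ hx₀
  have hf : ContinuousOn f S := h.continuousOn (Frequently.of_forall hF)
  rw [uniformity_basis_dist.equicontinuousWithinAt_iff_right]
  intro ε hε
  obtain ⟨N, hN⟩ :=
    eventually_atTop.1 (Metric.tendstoUniformlyOn_iff.1 h (ε / 3) (by positivity))
  have hhead : ∀ᶠ x in 𝓝[S] x₀, ∀ n ∈ Iio N, dist (F n x₀) (F n x) < ε :=
    (eventually_all_finite (finite_Iio N)).2 fun n _ =>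
      (Metric.continuousWithinAt_iff'.1 (hF n x₀ hx₀) ε hε).mono fun x hx => by
        rwa [dist_comm]
  have hlim : ∀ᶠ x in 𝓝[S] x₀, dist (f x₀) (f x) < ε / 3 :=
    (Metric.continuousWithinAt_iff'.1 (hf x₀ hx₀) (ε / 3) (by positivity)).mono fun x hx => by
      rwa [dist_comm]
  filter_upwards [hhead, hlim, self_mem_nhdsWithin] with x hxhead hxlim hxS n
  rcases lt_or_ge n N with hn | hn
  · exact hxhead n hn
  · calc dist (F n x₀) (F n x)
          ≤ dist (F n x₀) (f x₀) + dist (f x₀) (f x) + dist (f x) (F n x) := dist_triangle4 _ _ _ _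
      _ < ε / 3 + ε / 3 + ε / 3 := by
          gcongr
          · rw [dist_comm]; exact hN n hn x₀ hx₀
          · exact hN n hn x hxS
      _ = ε := by ring

theorem TendstoUniformlyOn.isBounded_iUnion_image {X α : Type*} [TopologicalSpace X]
    [PseudoMetricSpace α] {F : ℕ → X → α} {f : X → α} {K : Set X} (hK : IsCompact K)
    (hF : ∀ n, ContinuousOn (F n) K) (h : TendstoUniformlyOn F f atTop K) :
    IsBounded (⋃ n, F n '' K) := by
  have hf : ContinuousOn f K := h.continuousOn (Frequently.of_forall hF)
  obtain ⟨N, hN⟩ := eventually_atTop.1 (Metric.tendstoUniformlyOn_iff.1 h 1 one_pos)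
  have hsub : ⋃ n, F n '' K ⊆ (⋃ n ∈ Iio N, F n '' K) ∪ thickening 1 (f '' K) := by
    rintro _ ⟨_, ⟨n, rfl⟩, x, hx, rfl⟩
    rcases lt_or_ge n N with hn | hn
    · exact Or.inl (mem_biUnion hn (mem_image_of_mem _ hx))
    · exact Or.inr (mem_thickening_iff.2 ⟨f x, mem_image_of_mem _ hx, by
        rw [dist_comm]; exact hN n hn x hx⟩)
  refine IsBounded.subset (IsBounded.union ?_ ?_) hsub
  · exact (isBounded_biUnion (finite_Iio N)).2 fun n _ =>
      (hK.image_of_continuousOn (hF n)).isBounded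
  · exact (hK.image_of_continuousOn hf).isBounded.thickening

theorem exists_subseq_tendstoUniformlyOn_of_equicontinuousOn {X α : Type*} [TopologicalSpace X]
    [MetricSpace α] [Nonempty α] {K : Set X} (hK : IsCompact K) {F : ℕ → X → α}
    (hF : ∀ n, ContinuousOn (F n) K) (hFeq : EquicontinuousOn F K) {Q : Set α} (hQ : IsCompact Q)
    (hFQ : ∀ n, ∀ x ∈ K, F n x ∈ Q) :
    ∃ (k : ℕ → ℕ) (g : X → α), StrictMono k ∧ ContinuousOn g K ∧
      TendstoUniformlyOn (fun j => F (k j)) g atTop K := by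
  have := isCompact_iff_compactSpace.1 hK
  let G : ℕ → BoundedContinuousFunction K α := fun n =>
    .mkOfCompact ⟨K.domRestrict (F n), (hF n).domRestrict⟩
  have hGeq : Equicontinuous ((↑) : range G → K → α) := fun x₀ U hU =>
    ((equicontinuous_restrict_iff F).2 hFeq x₀ U hU).mono fun _ hx ⟨_, n, hn⟩ => hn ▸ hx n
  obtain ⟨a, -, k, hk, hka⟩ :=
    (BoundedContinuousFunction.arzela_ascoli Q hQ (range G)
      (by rintro _ x ⟨n, rfl⟩; exact hFQ n x x.2) hGeq).tendsto_subseq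
      (fun n => subset_closure (mem_range_self n))
  classical
  let g : X → α := fun x => if hx : x ∈ K then a ⟨x, hx⟩ else Classical.arbitrary α
  have hga : g ∘ (↑) = ⇑a := funext fun x => dif_pos x.2
  refine ⟨k, g, hk, continuousOn_iff_continuous_domRestrict.2 ?_, ?_⟩
  · show Continuous (g ∘ ((↑) : K → X))
    exact hga ▸ a.continuous
  · rw [tendstoUniformlyOn_iff_tendstoUniformly_comp_coe, hga]
    exact BoundedContinuousFunction.tendsto_iff_tendstoUniformly.1 hka

theorem stmt4_general (T : ℝ) (φn : ℕ → ℝ → ℂ) (φ : ℝ → ℂ)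
    (hnc : ∀ n, ContinuousOn (φn n) (Set.Icc 0 T)) (hn0 : ∀ n, φn n 0 = 0)
    (hconv : TendstoUniformlyOn φn φ Filter.atTop (Set.Icc 0 T))
    (hoff : ∀ n, ∀ t ∈ Set.Ioc 0 T, offPosReal (φn n t)) :
    ∃ (k : ℕ → ℕ) (A : ℝ → ℂ), StrictMono k ∧
      ContinuousOn A (Set.Icc 0 T) ∧
      (∀ t ∈ Set.Icc 0 T, A t ^ 2 = φ t ∧ 0 ≤ (A t).im) ∧
      TendstoUniformlyOn (fun j t => upSqrt (φn (k j) t)) A Filter.atTop (Set.Icc 0 T) := by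
  set ψ : ℕ → ℝ → ℂ := fun n t => upSqrt (φn n t)
  have hψc : ∀ n, ContinuousOn (ψ n) (Icc 0 T) := fun n t ht =>
    (continuousAt_upSqrt <| ht.1.eq_or_lt.imp (fun h => h ▸ hn0 n)
      fun h => hoff n t ⟨h, ht.2⟩).comp_continuousWithinAt (hnc n t ht)
  have hψeq : EquicontinuousOn ψ (Icc 0 T) := fun t ht =>
    EquicontinuousWithinAt.of_sq ordConnected_Icc ht hψc
      (by simpa only [ψ, upSqrt_sq] using hconv.equicontinuousOn hnc t ht)
  obtain ⟨C, hC⟩ :=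
    isBounded_iff_forall_norm_le.1 (hconv.isBounded_iUnion_image isCompact_Icc hnc)
  have hψC : ∀ n, ∀ t ∈ Icc 0 T, ψ n t ∈ closedBall 0 √C := fun n t ht => by
    rw [mem_closedBall_zero_iff, norm_upSqrt]
    exact Real.sqrt_le_sqrt (hC _ (mem_iUnion.2 ⟨n, mem_image_of_mem _ ht⟩))
  obtain ⟨k, A, hk, hAc, hA⟩ := exists_subseq_tendstoUniformlyOn_of_equicontinuousOn
    isCompact_Icc hψc hψeq (isCompact_closedBall 0 √C) hψC
  refine ⟨k, A, hk, hAc, fun t ht => ⟨?_, ?_⟩, hA⟩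
  · refine tendsto_nhds_unique ?_ ((hconv.tendsto_at ht).comp hk.tendsto_atTop)
    simpa only [ψ, upSqrt_sq, Function.comp_def] using (hA.tendsto_at ht).pow 2
  · exact ge_of_tendsto' (Complex.continuous_im.tendsto _ |>.comp (hA.tendsto_at ht))
      fun j => upSqrt_im_nonneg _

/-- If `φⁿ → φ` uniformly on `[0,T]`, all in `C₀([0,T],ℂ)` with
`φⁿ(t) ∈ ℂ \ [0,∞)` on `(0,T]`, then along a subsequence `√(φ^{n_k})` converges
uniformly to a (continuous) branch square root `A` of `φ`. -/
theorem stmt4 (T : ℝ) (hT : 0 < T) (φn : ℕ → ℝ → ℂ) (φ : ℝ → ℂ)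
    (hnc : ∀ n, ContinuousOn (φn n) (Set.Icc 0 T)) (hn0 : ∀ n, φn n 0 = 0)
    (hφc : ContinuousOn φ (Set.Icc 0 T)) (hφ0 : φ 0 = 0)
    (hconv : TendstoUniformlyOn φn φ Filter.atTop (Set.Icc 0 T))
    (hoff : ∀ n, ∀ t ∈ Set.Ioc 0 T, offPosReal (φn n t)) :
    ∃ (k : ℕ → ℕ) (A : ℝ → ℂ), StrictMono k ∧
      ContinuousOn A (Set.Icc 0 T) ∧
      (∀ t ∈ Set.Icc 0 T, A t ^ 2 = φ t ∧ 0 ≤ (A t).im) ∧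
      TendstoUniformlyOn (fun j t => upSqrt (φn (k j) t)) A Filter.atTop (Set.Icc 0 T) :=
  stmt4_general T φn φ hnc hn0 hconv hoff
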